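/- arXiv:1410.0951 — 3 statements merged into one kernel-verified Lean document; each statement's English description precedes it below -/
import Mathlib

section
/- Let P_1, P_2 be orthogonal projections on a finite-dimensional Hilbert space, and let μ be the smallest eigenvalue of P_1 P_2 P_1 restricted to the range of P_1 (i.e., μ = min{⟨ψ|P_2|ψ⟩ : ψ in range(P_1), ‖ψ‖ = 1}). Then the smallest eigenvalue of (I − P_1) + P_2 is at least 1 − √(1 − μ), which in turn is at least μ/2. -/
/-!
Put `p = P₁` and `q = 1 - P₂`, so that at a unit vector `x` the quadratic form of `1 - P₁ + P₂`
is `2 - S` with `S = ‖p x‖² + ‖q x‖²`. The Rayleigh bound gives `‖q u‖ ≤ c ‖u‖` on the range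
of `p`, with `c = √(1 - μ)`, hence `re ⟪p x, q x⟫ = re ⟪q p x, q x⟫ ≤ c ‖p x‖ ‖q x‖`.
Since `S = re ⟪x, p x + q x⟫ ≤ ‖p x + q x‖`, squaring gives
`S² ≤ S + 2c ‖p x‖ ‖q x‖ ≤ (1 + c) S`, so `S ≤ 1 + c`.
-/

open Matrix RCLike InnerProductSpace ComplexConjugate

section InnerProductSpace

variable {𝕜 E : Type*} [RCLike 𝕜] [NormedAddCommGroup E] [InnerProductSpace 𝕜 E]

theorem norm_sq_add_norm_sq_le_one_add {x u v : E} {c : ℝ} (hc : 0 ≤ c) (hx : ‖x‖ = 1)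
    (hu : re ⟪x, u⟫_𝕜 = ‖u‖ ^ 2) (hv : re ⟪x, v⟫_𝕜 = ‖v‖ ^ 2)
    (huv : re ⟪u, v⟫_𝕜 ≤ c * (‖u‖ * ‖v‖)) :
    ‖u‖ ^ 2 + ‖v‖ ^ 2 ≤ 1 + c := by
  set S := ‖u‖ ^ 2 + ‖v‖ ^ 2
  have hS : S ≤ ‖u + v‖ := by
    simpa [S, inner_add_right, hu, hv, hx] using re_inner_le_norm (𝕜 := 𝕜) x (u + v)
  have hsum : ‖u + v‖ ^ 2 ≤ (1 + c) * S := by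
    rw [norm_add_sq (𝕜 := 𝕜)]
    nlinarith [two_mul_le_add_sq ‖u‖ ‖v‖]
  nlinarith [sq_nonneg ‖u + v‖, norm_nonneg u, norm_nonneg v]

theorem mul_norm_sq_le_re_inner_of_forall_norm_eq_one {p T : E →ₗ[𝕜] E} {μ : ℝ}
    (hμ : ∀ ψ, p ψ = ψ → ‖ψ‖ = 1 → μ ≤ re ⟪ψ, T ψ⟫_𝕜) {u : E} (hu : p u = u) :
    μ * ‖u‖ ^ 2 ≤ re ⟪u, T u⟫_𝕜 := by
  rcases eq_or_ne u 0 with rfl | hu0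
  · simp
  have key := hμ ((‖u‖⁻¹ : 𝕜) • u) (by rw [map_smul, hu]) (norm_smul_inv_norm hu0)
  have hscalar : conj (‖u‖ : 𝕜)⁻¹ * (‖u‖ : 𝕜)⁻¹ = ((‖u‖ ^ 2)⁻¹ : ℝ) := by
    simp only [map_inv₀, conj_ofReal]
    push_cast
    ring
  rwa [map_smul, inner_smul_left, inner_smul_right, ← mul_assoc, hscalar, re_ofReal_mul,
    inv_mul_eq_div, le_div_iff₀ (by positivity)] at key

namespace LinearMap.IsSymmetricProjection

variable {p q : E →ₗ[𝕜] E}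

theorem one_sub (hp : p.IsSymmetricProjection) : (1 - p).IsSymmetricProjection :=
  ⟨hp.isIdempotentElem.one_sub, IsSymmetric.id.sub hp.isSymmetric⟩

theorem re_inner_apply_self (hp : p.IsSymmetricProjection) (x : E) :
    re ⟪x, p x⟫_𝕜 = ‖p x‖ ^ 2 := by
  conv_lhs => rw [← hp.isIdempotentElem]
  rw [Module.End.mul_apply, ← hp.isSymmetric, inner_self_eq_norm_sq]

theorem norm_sub_apply_sq (hp : p.IsSymmetricProjection) (x : E) :
    ‖x - p x‖ ^ 2 = ‖x‖ ^ 2 - re ⟪x, p x⟫_𝕜 := by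
  simpa [inner_sub_right, inner_self_eq_norm_sq] using (hp.one_sub.re_inner_apply_self x).symm

theorem re_inner_apply_self_le (hp : p.IsSymmetricProjection) (x : E) :
    re ⟪x, p x⟫_𝕜 ≤ ‖x‖ ^ 2 := by
  nlinarith [hp.norm_sub_apply_sq x, sq_nonneg ‖x - p x‖]

theorem norm_sq_add_norm_sq_le (hp : p.IsSymmetricProjection) (hq : q.IsSymmetricProjection)
    {c : ℝ} (hc : 0 ≤ c) (hqp : ∀ y, ‖q (p y)‖ ≤ c * ‖p y‖) {x : E} (hx : ‖x‖ = 1) :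
    ‖p x‖ ^ 2 + ‖q x‖ ^ 2 ≤ 1 + c := by
  refine norm_sq_add_norm_sq_le_one_add hc hx (hp.re_inner_apply_self x)
    (hq.re_inner_apply_self x) ?_
  calc re ⟪p x, q x⟫_𝕜 = re ⟪q (p x), q x⟫_𝕜 := by
        rw [hq.isSymmetric, ← Module.End.mul_apply, hq.isIdempotentElem]
    _ ≤ ‖q (p x)‖ * ‖q x‖ := re_inner_le_norm _ _
    _ ≤ c * (‖p x‖ * ‖q x‖) := by
        rw [← mul_assoc]
        exact mul_le_mul_of_nonneg_right (hqp x) (norm_nonneg _)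

theorem norm_sub_apply_le_sqrt_one_sub_mul (hq : q.IsSymmetricProjection) {μ : ℝ}
    (hμ : ∀ ψ, p ψ = ψ → ‖ψ‖ = 1 → μ ≤ re ⟪ψ, q ψ⟫_𝕜) {u : E} (hu : p u = u) :
    ‖u - q u‖ ≤ √(1 - μ) * ‖u‖ := by
  have hsq : ‖u - q u‖ ^ 2 ≤ (1 - μ) * ‖u‖ ^ 2 := by
    nlinarith [hq.norm_sub_apply_sq u, mul_norm_sq_le_re_inner_of_forall_norm_eq_one hμ hu]
  calc ‖u - q u‖ = √(‖u - q u‖ ^ 2) := (Real.sqrt_sq (norm_nonneg _)).symm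
    _ ≤ √((1 - μ) * ‖u‖ ^ 2) := Real.sqrt_le_sqrt hsq
    _ = √(1 - μ) * ‖u‖ := by rw [Real.sqrt_mul' _ (sq_nonneg _), Real.sqrt_sq (norm_nonneg _)]

theorem one_sub_sqrt_one_sub_le_re_inner (hp : p.IsSymmetricProjection)
    (hq : q.IsSymmetricProjection) {μ : ℝ} (hμ : ∀ ψ, p ψ = ψ → ‖ψ‖ = 1 → μ ≤ re ⟪ψ, q ψ⟫_𝕜)
    {x : E} (hx : ‖x‖ = 1) :
    1 - √(1 - μ) ≤ re ⟪x, (1 - p + q) x⟫_𝕜 := by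
  have hcos (y : E) : ‖(1 - q) (p y)‖ ≤ √(1 - μ) * ‖p y‖ :=
    hq.norm_sub_apply_le_sqrt_one_sub_mul hμ (u := p y) <| by
      rw [← Module.End.mul_apply, hp.isIdempotentElem]
  have hsum := hp.norm_sq_add_norm_sq_le hq.one_sub (Real.sqrt_nonneg _) hcos hx
  have hform : re ⟪x, (1 - p + q) x⟫_𝕜 = 2 - (‖p x‖ ^ 2 + ‖(1 - q) x‖ ^ 2) := by
    simp only [add_apply, sub_apply, Module.End.one_apply, inner_add_right, inner_sub_right,
      map_add, map_sub, inner_self_eq_norm_sq, hp.re_inner_apply_self, hq.norm_sub_apply_sq, hx]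
    ring
  linarith

end LinearMap.IsSymmetricProjection

theorem half_le_one_sub_sqrt_one_sub {μ : ℝ} (hμ : μ ≤ 2) : μ / 2 ≤ 1 - √(1 - μ) := by
  have : √(1 - μ) ≤ 1 - μ / 2 := Real.sqrt_le_iff.mpr ⟨by linarith, by nlinarith [sq_nonneg μ]⟩
  linarith

variable {n : Type*} [Fintype n]

theorem EuclideanSpace.norm_toLp_eq_one_iff (ψ : n → 𝕜) :
    ‖WithLp.toLp 2 ψ‖ = 1 ↔ star ψ ⬝ᵥ ψ = 1 := by
  rw [← pow_eq_one_iff_of_nonneg (norm_nonneg _) two_ne_zero, ← ofReal_inj (K := 𝕜), ofReal_pow,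
    ← inner_self_eq_norm_sq_to_K, EuclideanSpace.inner_eq_star_dotProduct, dotProduct_comm]
  simp

variable [DecidableEq n]

theorem Matrix.isSymmetricProjection_toEuclideanLin {A : Matrix n n 𝕜} (hA : A.IsHermitian)
    (hAA : A * A = A) : A.toEuclideanLin.IsSymmetricProjection := by
  refine ⟨LinearMap.ext fun x => ?_, isSymmetric_toEuclideanLin_iff.mpr hA⟩
  simp [toLpLin_apply, mulVec_mulVec, hAA]

theorem Matrix.star_dotProduct_mulVec_eq_inner (A : Matrix n n 𝕜) (ψ φ : n → 𝕜) :
    star ψ ⬝ᵥ A *ᵥ φ = ⟪WithLp.toLp 2 ψ, A.toEuclideanLin (WithLp.toLp 2 φ)⟫_𝕜 := by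
  rw [EuclideanSpace.inner_eq_star_dotProduct, dotProduct_comm]
  rfl

end InnerProductSpace

theorem stmt_3_general (n : ℕ) (P₁ P₂ : Matrix (Fin n) (Fin n) ℂ)
    (hP₁herm : P₁.IsHermitian) (hP₁idem : P₁ * P₁ = P₁)
    (hP₂herm : P₂.IsHermitian) (hP₂idem : P₂ * P₂ = P₂)
    (hrange : ∃ ψ : Fin n → ℂ, P₁.mulVec ψ = ψ ∧ star ψ ⬝ᵥ ψ = 1)
    (μ : ℝ)
    (hμ_lb : ∀ ψ : Fin n → ℂ, P₁.mulVec ψ = ψ → star ψ ⬝ᵥ ψ = 1 →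
      μ ≤ (star ψ ⬝ᵥ P₂.mulVec ψ).re) :
    (∀ ψ : Fin n → ℂ, star ψ ⬝ᵥ ψ = 1 →
        1 - Real.sqrt (1 - μ) ≤ (star ψ ⬝ᵥ ((1 - P₁ + P₂).mulVec ψ)).re) ∧
      μ / 2 ≤ 1 - Real.sqrt (1 - μ) := by
  have hp := isSymmetricProjection_toEuclideanLin hP₁herm hP₁idem
  have hq := isSymmetricProjection_toEuclideanLin hP₂herm hP₂idem
  have hμ : ∀ x, P₁.toEuclideanLin x = x → ‖x‖ = 1 → μ ≤ re ⟪x, P₂.toEuclideanLin x⟫_ℂ := by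
    rintro ⟨ψ⟩ hψ hx
    rw [← star_dotProduct_mulVec_eq_inner]
    exact hμ_lb ψ (congrArg WithLp.ofLp hψ) ((EuclideanSpace.norm_toLp_eq_one_iff ψ).mp hx)
  refine ⟨fun ψ hψ => ?_, half_le_one_sub_sqrt_one_sub ?_⟩
  · rw [star_dotProduct_mulVec_eq_inner, map_add, map_sub, toLpLin_one, ← Module.End.one_eq_id]
    exact hp.one_sub_sqrt_one_sub_le_re_inner hq hμ
      ((EuclideanSpace.norm_toLp_eq_one_iff ψ).mpr hψ)
  · obtain ⟨ψ, hψ, hψ_unit⟩ := hrange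
    have hx := (EuclideanSpace.norm_toLp_eq_one_iff ψ).mpr hψ_unit
    have hμ_le_one := (hμ _ (congrArg (WithLp.toLp 2) hψ) hx).trans (hq.re_inner_apply_self_le _)
    rw [hx, one_pow] at hμ_le_one
    linarith

/-- Let `P₁, P₂` be orthogonal projections, and let `μ` be the minimum of the
Rayleigh quotient `⟨ψ|P₂|ψ⟩` over unit vectors `ψ` in the range of `P₁`.
Then every eigenvalue of `(I − P₁) + P₂` is at least `1 − √(1 − μ) ≥ μ/2`. -/
theorem stmt_3 (n : ℕ) (P₁ P₂ : Matrix (Fin n) (Fin n) ℂ)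
    (hP₁herm : P₁.IsHermitian) (hP₁idem : P₁ * P₁ = P₁)
    (hP₂herm : P₂.IsHermitian) (hP₂idem : P₂ * P₂ = P₂)
    (hrange : ∃ ψ : Fin n → ℂ, P₁.mulVec ψ = ψ ∧ star ψ ⬝ᵥ ψ = 1)
    (μ : ℝ)
    (hμ_lb : ∀ ψ : Fin n → ℂ, P₁.mulVec ψ = ψ → star ψ ⬝ᵥ ψ = 1 →
      μ ≤ (star ψ ⬝ᵥ P₂.mulVec ψ).re)
    (hμ_min : ∃ ψ : Fin n → ℂ, P₁.mulVec ψ = ψ ∧ star ψ ⬝ᵥ ψ = 1 ∧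
      (star ψ ⬝ᵥ P₂.mulVec ψ).re = μ) :
    (∀ ψ : Fin n → ℂ, star ψ ⬝ᵥ ψ = 1 →
        1 - Real.sqrt (1 - μ) ≤ (star ψ ⬝ᵥ ((1 - P₁ + P₂).mulVec ψ)).re) ∧
      μ / 2 ≤ 1 - Real.sqrt (1 - μ) :=
  stmt_3_general n P₁ P₂ hP₁herm hP₁idem hP₂herm hP₂idem hrange μ hμ_lb
end

section
/- Let U_1 = I, U_2, U_3 be D×D unitaries and G = (1/(3√D)) Σ_{i,j=1}^3 U_i U_j ⊗ |i⟩⟨j| (a 3D × 3D matrix). Then G G† is unitarily conjugate (via W = Σ_i U_i ⊗ |i⟩⟨i|) to (1/D) I_D ⊗ (1/3) Σ_{i,i'} |i⟩⟨i'|; in particular G G† has exactly D nonzero eigenvalues, each equal to 1/D. -/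
/-!
Writing `W = blockDiagonal U` and `K = 1 ⊗ J` with `J` the all-ones `3 × 3` matrix, one has
`Σ_{i,j} U_i U_j ⊗ |i⟩⟨j| = W K W`. Since `W` is unitary and `K` Hermitian,
`Wᴴ (W K W)(W K W)ᴴ W = K² = 3 K`, and the normalisation `1/(9D)` of `G Gᴴ` turns `3 K` into
`(1/D) (1 ⊗ J/3)`.
-/

open Matrix Kronecker

section BlockDiagonal

variable {m o α : Type*} [Fintype o] [DecidableEq o]

theorem sum_kronecker_single_eq_blockDiagonal [Semiring α] (A : o → Matrix m m α) :
    ∑ i, A i ⊗ₖ single i i (1 : α) = blockDiagonal A := by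
  ext ⟨a, i⟩ ⟨b, j⟩
  simp [Matrix.sum_apply, blockDiagonal_apply', single_apply, ite_and]

variable [Fintype m] [DecidableEq m]

theorem blockDiagonal_mul_one_kronecker_mul_blockDiagonal [CommSemiring α]
    (A B : o → Matrix m m α) (M : Matrix o o α) :
    blockDiagonal A * ((1 : Matrix m m α) ⊗ₖ M) * blockDiagonal B
      = ∑ i, ∑ j, (M i j • (A i * B j)) ⊗ₖ single i j (1 : α) := by
  ext ⟨a, i⟩ ⟨b, j⟩
  simp [mul_apply, Matrix.sum_apply, blockDiagonal_apply', single_apply, Fintype.sum_prod_type,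
    one_apply, ite_and, Finset.mul_sum]
  exact Finset.sum_congr rfl fun _ _ => by ring

theorem blockDiagonal_mem_unitaryGroup [CommRing α] [StarRing α] {U : o → Matrix m m α}
    (hU : ∀ i, U i ∈ unitaryGroup m α) : blockDiagonal U ∈ unitaryGroup (m × o) α := by
  simp only [mem_unitaryGroup_iff', star_eq_conjTranspose] at hU ⊢
  rw [blockDiagonal_conjTranspose, ← blockDiagonal_mul]
  simp_rw [hU]
  exact blockDiagonal_one

end BlockDiagonal

section

variable {n α : Type*}

theorem ones_mul_ones [Fintype n] [Semiring α] :
    (of fun _ _ => (1 : α) : Matrix n n α) * of (fun _ _ => 1)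
      = (Fintype.card n : α) • of (fun _ _ => 1) := by
  ext i j
  simp [mul_apply]

theorem isHermitian_one_kronecker_ones [DecidableEq n] {m : Type*} [DecidableEq m]
    [CommRing α] [StarRing α] :
    ((1 : Matrix m m α) ⊗ₖ (of fun _ _ => (1 : α) : Matrix n n α)).IsHermitian := by
  rw [IsHermitian, conjTranspose_kronecker, conjTranspose_one]
  congr
  ext i j
  simp

theorem conjTranspose_mul_mul_conjTranspose_mul_of_mem_unitaryGroup [Fintype n] [DecidableEq n]
    [CommRing α] [StarRing α] {W K : Matrix n n α} (hW : W ∈ unitaryGroup n α) (hK : K.IsHermitian) :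
    Wᴴ * (W * K * W * (W * K * W)ᴴ) * W = K * K := by
  have hWW : Wᴴ * W = 1 := mem_unitaryGroup_iff'.mp hW
  have hWW' : W * Wᴴ = 1 := mem_unitaryGroup_iff.mp hW
  calc Wᴴ * (W * K * W * (W * K * W)ᴴ) * W
      = (Wᴴ * W) * K * (W * Wᴴ) * K * (Wᴴ * W) := by
        simp only [conjTranspose_mul, hK.eq, Matrix.mul_assoc]
    _ = K * K := by rw [hWW, hWW', Matrix.one_mul, Matrix.mul_one, Matrix.mul_one]

end

theorem inv_mul_star_inv_three_mul_sqrt (D : ℕ) :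
    (((3 : ℝ) * Real.sqrt D : ℝ) : ℂ)⁻¹ * star (((3 : ℝ) * Real.sqrt D : ℝ) : ℂ)⁻¹
      = (9 * (D : ℂ))⁻¹ := by
  have h9 : (3 * Real.sqrt D) * (3 * Real.sqrt D) = 9 * (D : ℝ) := by
    rw [mul_mul_mul_comm, Real.mul_self_sqrt D.cast_nonneg]
    norm_num
  rw [Complex.star_def, map_inv₀, Complex.conj_ofReal, ← mul_inv, ← Complex.ofReal_mul, h9]
  push_cast
  rfl

theorem stmt_7_general (D : ℕ) (U : Fin 3 → Matrix (Fin D) (Fin D) ℂ)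
    (hU : ∀ i, (U i)ᴴ * U i = 1) :
    letI G : Matrix (Fin D × Fin 3) (Fin D × Fin 3) ℂ :=
      (((3 : ℝ) * Real.sqrt D : ℝ) : ℂ)⁻¹ •
        ∑ i : Fin 3, ∑ j : Fin 3, (U i * U j) ⊗ₖ Matrix.single i j (1 : ℂ)
    letI W : Matrix (Fin D × Fin 3) (Fin D × Fin 3) ℂ :=
      ∑ i : Fin 3, (U i) ⊗ₖ Matrix.single i i (1 : ℂ)
    Wᴴ * (G * Gᴴ) * W
      = ((D : ℂ))⁻¹ • ((1 : Matrix (Fin D) (Fin D) ℂ) ⊗ₖ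
          ((3 : ℂ)⁻¹ • Matrix.of (fun _ _ : Fin 3 => (1 : ℂ)))) := by
  have hW : blockDiagonal U ∈ unitaryGroup _ ℂ :=
    blockDiagonal_mem_unitaryGroup fun i => mem_unitaryGroup_iff'.mpr (hU i)
  have hG := blockDiagonal_mul_one_kronecker_mul_blockDiagonal U U (of fun _ _ => (1 : ℂ))
  simp only [of_apply, one_smul] at hG
  rw [sum_kronecker_single_eq_blockDiagonal, ← hG, conjTranspose_smul, smul_mul_smul_comm,
    Matrix.mul_smul, Matrix.smul_mul, inv_mul_star_inv_three_mul_sqrt,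
    conjTranspose_mul_mul_conjTranspose_mul_of_mem_unitaryGroup hW isHermitian_one_kronecker_ones,
    ← mul_kronecker_mul, Matrix.one_mul, ones_mul_ones, Fintype.card_fin, kronecker_smul,
    kronecker_smul, smul_smul, smul_smul]
  congr 1
  ring

/-- With `U₁ = I`, `U₂, U₃` unitary, `G = (1/(3√D)) Σ_{i,j} U_i U_j ⊗ |i⟩⟨j|` and
`W = Σ_i U_i ⊗ |i⟩⟨i|`, we have `Wᴴ (G Gᴴ) W = (I_D/D) ⊗ ((1/3) Σ_{i,i'} |i⟩⟨i'|)`;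
in particular `G Gᴴ` has exactly `D` nonzero eigenvalues, each equal to `1/D`. -/
theorem stmt_7 (D : ℕ) (hD : 1 ≤ D) (U : Fin 3 → Matrix (Fin D) (Fin D) ℂ)
    (hU0 : U 0 = 1) (hU : ∀ i, (U i)ᴴ * U i = 1) :
    letI G : Matrix (Fin D × Fin 3) (Fin D × Fin 3) ℂ :=
      (((3 : ℝ) * Real.sqrt D : ℝ) : ℂ)⁻¹ •
        ∑ i : Fin 3, ∑ j : Fin 3, (U i * U j) ⊗ₖ Matrix.single i j (1 : ℂ)
    letI W : Matrix (Fin D × Fin 3) (Fin D × Fin 3) ℂ :=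
      ∑ i : Fin 3, (U i) ⊗ₖ Matrix.single i i (1 : ℂ)
    Wᴴ * (G * Gᴴ) * W
      = ((D : ℂ))⁻¹ • ((1 : Matrix (Fin D) (Fin D) ℂ) ⊗ₖ
          ((3 : ℂ)⁻¹ • Matrix.of (fun _ _ : Fin 3 => (1 : ℂ)))) :=
  stmt_7_general D U hU
end

section
/- With G as above (G = (1/(3√D)) Σ_{i,j=1}^3 U_i U_j ⊗ |i⟩⟨j|, U_1 = I, U_2, U_3 unitary), the von Neumann entropy of G G† equals log D. Equivalently, the entanglement entropy of the corresponding pure state across the cut is log D. -/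
/-!
Over the ring of `D × D` matrices, `∑ U_i U_j ⊗ |i⟩⟨j|` is the rank-one block matrix `u uᵀ` built
from the column `u = (U_i)_i`, and unitarity gives `u* u = u u* = 3`. Hence `G G† = (3D)⁻¹ P` with
`P = u u*`, where `P² = 3 P` and `tr P = 3 D`. So `ρ = G G†` satisfies `ρ² = ρ / D` and `tr ρ = 1`:
its eigenvalues lie in `{0, 1/D}` and sum to `1`, which makes its entropy `log D`.
-/

open Matrix Kronecker

namespace Matrix

variable {m n R : Type*}

/-- The block index is the *second* factor of `m × n`, as in `A i j ⊗ₖ single i j 1`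
(unlike `Matrix.comp`, which puts it first). -/
def ofBlocks (A : Matrix n n (Matrix m m R)) : Matrix (m × n) (m × n) R :=
  of fun p q => A p.2 q.2 p.1 q.1

theorem conjTranspose_ofBlocks [Star R] (A : Matrix n n (Matrix m m R)) :
    (ofBlocks A)ᴴ = ofBlocks Aᴴ := rfl

theorem ofBlocks_smul {S : Type*} [SMul S R] (s : S) (A : Matrix n n (Matrix m m R)) :
    ofBlocks (s • A) = s • ofBlocks A := rfl

variable [Fintype n] [Semiring R]

theorem ofBlocks_eq_sum_kronecker_single [DecidableEq n] (A : Matrix n n (Matrix m m R)) :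
    ofBlocks A = ∑ i, ∑ j, A i j ⊗ₖ single i j 1 := by
  ext ⟨a, i⟩ ⟨b, j⟩
  simp [ofBlocks, sum_apply, kroneckerMap_apply, single_apply, ite_and]

variable [Fintype m]

theorem ofBlocks_mul (A B : Matrix n n (Matrix m m R)) :
    ofBlocks (A * B) = ofBlocks A * ofBlocks B := by
  ext ⟨a, i⟩ ⟨c, l⟩
  simp only [ofBlocks, of_apply, mul_apply, sum_apply, Fintype.sum_prod_type]
  rw [Finset.sum_comm]

theorem trace_ofBlocks (A : Matrix n n (Matrix m m R)) :
    (ofBlocks A).trace = ∑ i, (A i i).trace := by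
  simp only [trace, diag, ofBlocks, of_apply, Fintype.sum_prod_type]
  rw [Finset.sum_comm]

end Matrix

section Unitary

variable {n A : Type*} [Fintype n] [Semiring A] [StarMul A] {u : n → A}

theorem star_dotProduct_self_of_mem_unitary (hu : ∀ i, u i ∈ unitary A) :
    star u ⬝ᵥ u = Fintype.card n := by
  simp [dotProduct, Unitary.star_mul_self_of_mem (hu _)]

theorem dotProduct_star_self_of_mem_unitary (hu : ∀ i, u i ∈ unitary A) :
    u ⬝ᵥ star u = Fintype.card n := by
  simp [dotProduct, Unitary.mul_star_self_of_mem (hu _)]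

theorem vecMulVec_mul_conjTranspose_of_mem_unitary (hu : ∀ i, u i ∈ unitary A) :
    vecMulVec u u * (vecMulVec u u)ᴴ = Fintype.card n • vecMulVec u (star u) := by
  rw [conjTranspose_vecMulVec, vecMulVec_mul_vecMulVec, dotProduct_star_self_of_mem_unitary hu,
    ← vecMulVec_smul]
  ext i j
  simp [vecMulVec_apply]

theorem vecMulVec_star_mul_self_of_mem_unitary (hu : ∀ i, u i ∈ unitary A) :
    vecMulVec u (star u) * vecMulVec u (star u) = Fintype.card n • vecMulVec u (star u) := by
  rw [vecMulVec_mul_vecMulVec, star_dotProduct_self_of_mem_unitary hu, ← vecMulVec_smul]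
  ext i j
  simp [vecMulVec_apply]

end Unitary

theorem Matrix.trace_ofBlocks_vecMulVec_star {m n R : Type*} [Fintype m] [DecidableEq m]
    [Fintype n] [Semiring R] [StarRing R] {U : n → Matrix m m R}
    (hU : ∀ i, U i ∈ unitary (Matrix m m R)) :
    (ofBlocks (vecMulVec U (star U))).trace = Fintype.card n * Fintype.card m := by
  simp [trace_ofBlocks, vecMulVec_apply, Unitary.mul_star_self_of_mem (hU _)]

theorem Finset.sum_neg_mul_log_of_forall_eq_zero_or {ι : Type*} (s : Finset ι) {f : ι → ℝ}
    {r : ℝ} (hf : ∀ i ∈ s, f i = 0 ∨ f i = r) :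
    ∑ i ∈ s, -(f i * Real.log (f i)) = -((∑ i ∈ s, f i) * Real.log r) := by
  rw [Finset.sum_mul, ← Finset.sum_neg_distrib]
  refine Finset.sum_congr rfl fun i hi => ?_
  rcases hf i hi with h | h <;> rw [h]
  simp

namespace Matrix.IsHermitian

variable {ι 𝕜 : Type*} [Fintype ι] [DecidableEq ι] [RCLike 𝕜] {A : Matrix ι ι 𝕜}

theorem eigenvalues_eq_zero_or_of_mul_self_eq_smul (hA : A.IsHermitian) {r : ℝ}
    (hAA : A * A = (r : 𝕜) • A) (k : ι) :
    hA.eigenvalues k = 0 ∨ hA.eigenvalues k = r := by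
  set v := ⇑(hA.eigenvectorBasis k)
  have hv : A *ᵥ v = hA.eigenvalues k • v := hA.mulVec_eigenvectorBasis k
  have hv0 : v ≠ 0 := by
    simpa [v] using hA.eigenvectorBasis.orthonormal.ne_zero k
  have h : (hA.eigenvalues k * hA.eigenvalues k) • v = (r * hA.eigenvalues k) • v := by
    calc (hA.eigenvalues k * hA.eigenvalues k) • v = A *ᵥ (A *ᵥ v) := by
          rw [hv, mulVec_smul, hv, smul_smul]
      _ = (r * hA.eigenvalues k) • v := by
          rw [mulVec_mulVec, hAA, smul_mulVec, hv, ← RCLike.real_smul_eq_coe_smul, smul_smul]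
  rcases mul_eq_mul_right_iff.mp (smul_left_injective ℝ hv0 h) with h | h
  · exact Or.inr h
  · exact Or.inl h

theorem sum_eigenvalues_eq_one_of_trace_eq_one (hA : A.IsHermitian) (htr : A.trace = 1) :
    ∑ k, hA.eigenvalues k = 1 := by
  have := hA.trace_eq_sum_eigenvalues
  rw [htr] at this
  exact_mod_cast this.symm

theorem sum_neg_mul_log_eigenvalues_of_mul_self_eq_smul (hA : A.IsHermitian) {r : ℝ}
    (hAA : A * A = (r : 𝕜) • A) (htr : A.trace = 1) :
    ∑ k, -(hA.eigenvalues k * Real.log (hA.eigenvalues k)) = -Real.log r := by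
  rw [Finset.sum_neg_mul_log_of_forall_eq_zero_or _ fun k _ =>
    hA.eigenvalues_eq_zero_or_of_mul_self_eq_smul hAA k,
    hA.sum_eigenvalues_eq_one_of_trace_eq_one htr, one_mul]

end Matrix.IsHermitian

theorem stmt_8_general (D : ℕ) (hD : 1 ≤ D) (U : Fin 3 → Matrix (Fin D) (Fin D) ℂ)
    (hU : ∀ i, (U i)ᴴ * U i = 1)
    (G : Matrix (Fin D × Fin 3) (Fin D × Fin 3) ℂ)
    (hG : G = (((3 : ℝ) * Real.sqrt D : ℝ) : ℂ)⁻¹ •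
      ∑ i : Fin 3, ∑ j : Fin 3, (U i * U j) ⊗ₖ Matrix.single i j (1 : ℂ))
    (hherm : (G * Gᴴ).IsHermitian) :
    ∑ k, -(hherm.eigenvalues k * Real.log (hherm.eigenvalues k)) = Real.log D := by
  have hU' (i : Fin 3) : U i ∈ unitary (Matrix (Fin D) (Fin D) ℂ) :=
    mem_unitaryGroup_iff'.mpr (hU i)
  have hD' : (D : ℂ) ≠ 0 := by exact_mod_cast (by omega : D ≠ 0)
  have hS : ∑ i : Fin 3, ∑ j : Fin 3, (U i * U j) ⊗ₖ single i j (1 : ℂ) =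
      ofBlocks (vecMulVec U U) :=
    (ofBlocks_eq_sum_kronecker_single _).symm
  set P := ofBlocks (vecMulVec U (star U))
  have hPP : P * P = ((3 : ℕ) : ℂ) • P := by
    rw [← ofBlocks_mul, vecMulVec_star_mul_self_of_mem_unitary hU', ofBlocks_smul,
      Fintype.card_fin, ← Nat.cast_smul_eq_nsmul ℂ]
  have hρ : G * Gᴴ = (((3 * D : ℝ)⁻¹ : ℝ) : ℂ) • P := by
    rw [hG, hS, conjTranspose_smul, smul_mul_smul, conjTranspose_ofBlocks, ← ofBlocks_mul,
      vecMulVec_mul_conjTranspose_of_mem_unitary hU', ofBlocks_smul, Fintype.card_fin,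
      ← Nat.cast_smul_eq_nsmul ℂ, smul_smul, star_inv₀, Complex.star_def, Complex.conj_ofReal,
      ← mul_inv, ← Complex.ofReal_mul, mul_mul_mul_comm, Real.mul_self_sqrt (Nat.cast_nonneg D)]
    congr 1
    push_cast
    field_simp
  have hρρ : (G * Gᴴ) * (G * Gᴴ) = (((D : ℝ)⁻¹ : ℝ) : ℂ) • (G * Gᴴ) := by
    rw [hρ, smul_mul_smul, hPP, smul_smul, smul_smul]
    congr 1
    push_cast
    field_simp
  have htr : (G * Gᴴ).trace = 1 := by
    rw [hρ, trace_smul, trace_ofBlocks_vecMulVec_star hU', Fintype.card_fin, Fintype.card_fin,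
      smul_eq_mul]
    push_cast
    field_simp
  rw [hherm.sum_neg_mul_log_eigenvalues_of_mul_self_eq_smul (r := (D : ℝ)⁻¹) hρρ htr,
    Real.log_inv, neg_neg]

/-- With `U₁ = I`, `U₂, U₃` unitary and `G = (1/(3√D)) Σ_{i,j} U_i U_j ⊗ |i⟩⟨j|`,
the von Neumann entropy of `G Gᴴ` (the sum of `−λ log λ` over its eigenvalues)
equals `log D`. -/
theorem stmt_8 (D : ℕ) (hD : 1 ≤ D) (U : Fin 3 → Matrix (Fin D) (Fin D) ℂ)
    (hU0 : U 0 = 1) (hU : ∀ i, (U i)ᴴ * U i = 1)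
    (G : Matrix (Fin D × Fin 3) (Fin D × Fin 3) ℂ)
    (hG : G = (((3 : ℝ) * Real.sqrt D : ℝ) : ℂ)⁻¹ •
      ∑ i : Fin 3, ∑ j : Fin 3, (U i * U j) ⊗ₖ Matrix.single i j (1 : ℂ))
    (hherm : (G * Gᴴ).IsHermitian) :
    ∑ k, -(hherm.eigenvalues k * Real.log (hherm.eigenvalues k)) = Real.log D :=
  stmt_8_general D hD U hU G hG hherm
end
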